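/- Under the stated projection setting, if moreover μ_k > 0 and μ_{k,h} > 0, then setting λ_k = 1/μ_k and λ_{k,h} = 1/μ_{k,h}, the explicit lower eigenvalue bound λ_k ≥ λ_{k,h} / (1 + C_h² λ_{k,h}) holds. -/

import Mathlib

open Module

private lemma projection_lower_bound_aux (r S e Ch t g : ℝ) (hCh : 0 ≤ Ch)
    (ht : t = S ^ 2 - e ^ 2) (hg : r * S - Ch * e ≤ g)
    (hrSe : 0 ≤ r * S - Ch * e) (hg0 : 0 ≤ g) :
    (r ^ 2 - Ch ^ 2) * t ≤ g ^ 2 := by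
  have h1 : (r * S - Ch * e) ^ 2 ≤ g ^ 2 := by nlinarith
  nlinarith [sq_nonneg (r * e - Ch * S)]

/-- Projection-based explicit lower eigenvalue bound:
    λ_k ≥ λ_{k,h} / (1 + C_h² λ_{k,h}). -/
theorem projection_lower_bound_lambda
    {Z W : Type*} [AddCommGroup Z] [Module ℝ Z]
    [NormedAddCommGroup W] [InnerProductSpace ℝ W]
    (a : Z →ₗ[ℝ] Z →ₗ[ℝ] ℝ)
    (ha_symm : ∀ u v : Z, a u v = a v u)
    (ha_psd : ∀ v : Z, 0 ≤ a v v)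
    (γ : Z →ₗ[ℝ] W)
    (Vh : Submodule ℝ Z) [FiniteDimensional ℝ Vh]
    (ha_pos : ∀ v ∈ Vh, v ≠ 0 → 0 < a v v)
    (Ph : Z →ₗ[ℝ] Z)
    (hPh_mem : ∀ u : Z, Ph u ∈ Vh)
    (hPh_orth : ∀ u : Z, ∀ vh ∈ Vh, a (u - Ph u) vh = 0)
    (Ch : ℝ) (hCh : 0 ≤ Ch)
    (hCh_bound : ∀ v : Z, ‖γ (v - Ph v)‖ ≤ Ch * Real.sqrt (a (v - Ph v) (v - Ph v)))
    (R : Z → ℝ)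
    (hR : ∀ v : Z, R v = ‖γ v‖ ^ 2 / a v v)
    (k : ℕ) (hk1 : 1 ≤ k) (hkd : k ≤ finrank ℝ Vh)
    (μ : Fin k → ℝ) (hμ_anti : Antitone μ) (hμ_nonneg : ∀ i, 0 ≤ μ i)
    (u : Fin k → Z)
    (h_orth : ∀ i j, a (u i) (u j) = if i = j then (1 : ℝ) else 0)
    (h_eig : ∀ i j, (inner ℝ (γ (u i)) (γ (u j)) : ℝ) = if i = j then μ i else 0)
    (μkh : ℝ)
    (hμkh : IsGreatest {m : ℝ | ∃ H : Submodule ℝ Z, H ≤ Vh ∧ finrank ℝ H = k ∧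
        IsLeast (R '' {x : Z | x ∈ H ∧ x ≠ 0}) m} μkh)
    (hμk_pos : 0 < μ ⟨k - 1, by omega⟩) (hμkh_pos : 0 < μkh)
    (lamk lamkh : ℝ)
    (hlamk : lamk = 1 / μ ⟨k - 1, by omega⟩)
    (hlamkh : lamkh = 1 / μkh) :
    lamk ≥ lamkh / (1 + Ch ^ 2 * lamkh) := by
  classical
  have k1lt : k - 1 < k := by omega
  set k1 : Fin k := ⟨k - 1, k1lt⟩ with hk1def
  have hμk0 : 0 < μ k1 := hμk_pos
  -- KEY CLAIM: μ_k ≤ μ_{k,h} + C_h^2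
  have key : μ k1 ≤ μkh + Ch ^ 2 := by
    by_cases hcase : μ k1 ≤ Ch ^ 2
    · linarith
    push_neg at hcase
    have hμk_le : ∀ i : Fin k, μ k1 ≤ μ i := by
      intro i
      apply hμ_anti
      have hi := i.isLt
      rw [Fin.le_def]
      simp only [hk1def]
      omega
    -- the parametrizing linear map
    set T : (Fin k → ℝ) →ₗ[ℝ] Z := Ph ∘ₗ (Fintype.linearCombination ℝ u) with hTdef
    have hTapp : ∀ c : Fin k → ℝ, T c = Ph (∑ i, c i • u i) := by
      intro c
      simp [hTdef, Fintype.linearCombination_apply]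
    -- coordinate computations
    have ha_sum : ∀ c : Fin k → ℝ,
        a (∑ i, c i • u i) (∑ i, c i • u i) = ∑ i, (c i) ^ 2 := by
      intro c
      simp only [map_sum, map_smul, LinearMap.coe_sum, Finset.sum_apply,
        LinearMap.smul_apply, smul_eq_mul, h_orth, mul_ite, mul_one, mul_zero]
      simp only [Finset.sum_ite_eq', Finset.mem_univ, if_true]
      exact Finset.sum_congr rfl (fun i _ => by ring)
    have hg_sum : ∀ c : Fin k → ℝ,
        ‖γ (∑ i, c i • u i)‖ ^ 2 = ∑ i, (c i) ^ 2 * μ i := by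
      intro c
      rw [← real_inner_self_eq_norm_sq, map_sum]
      rw [sum_inner]
      simp only [map_smul, real_inner_smul_left, inner_sum, real_inner_smul_right, h_eig,
        mul_ite, mul_zero]
      simp only [Finset.sum_ite_eq, Finset.sum_ite_eq', Finset.mem_univ, if_true]
      exact Finset.sum_congr rfl (fun i _ => by ring)
    -- Pythagoras
    have hpyth : ∀ v : Z, a v v = a (v - Ph v) (v - Ph v) + a (Ph v) (Ph v) := by
      intro v
      have h0 : a (v - Ph v) (Ph v) = 0 := hPh_orth v (Ph v) (hPh_mem v)
      have h0' : a (Ph v) (v - Ph v) = 0 := by rw [ha_symm]; exact h0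
      have hv : v = (v - Ph v) + Ph v := by abel
      calc a v v = a ((v - Ph v) + Ph v) ((v - Ph v) + Ph v) := by rw [← hv]
        _ = a (v - Ph v) (v - Ph v) + a (v - Ph v) (Ph v)
            + (a (Ph v) (v - Ph v) + a (Ph v) (Ph v)) := by
              simp only [map_add, LinearMap.add_apply]; ring
        _ = a (v - Ph v) (v - Ph v) + a (Ph v) (Ph v) := by rw [h0, h0']; ring
    -- core estimate
    have hcore : ∀ c : Fin k → ℝ, c ≠ 0 →
        0 < a (T c) (T c) ∧ (μ k1 - Ch ^ 2) * a (T c) (T c) ≤ ‖γ (T c)‖ ^ 2 := by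
      intro c hc
      obtain ⟨v, hvdef⟩ : ∃ v : Z, v = ∑ i, c i • u i := ⟨_, rfl⟩
      have hTc : T c = Ph v := by rw [hvdef]; exact hTapp c
      obtain ⟨s, hsdef⟩ : ∃ s : ℝ, s = ∑ i, (c i) ^ 2 := ⟨_, rfl⟩
      have havv : a v v = s := by rw [hvdef, hsdef]; exact ha_sum c
      have hG2 : ‖γ v‖ ^ 2 = ∑ i, (c i) ^ 2 * μ i := by rw [hvdef]; exact hg_sum c
      have hs_pos : 0 < s := by
        rw [hsdef]
        obtain ⟨i, hi⟩ : ∃ i, c i ≠ 0 := by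
          by_contra h
          push_neg at h
          exact hc (funext h)
        exact Finset.sum_pos' (fun j _ => sq_nonneg _)
          ⟨i, Finset.mem_univ i, by positivity⟩
      obtain ⟨t, htdef⟩ : ∃ t : ℝ, t = a (Ph v) (Ph v) := ⟨_, rfl⟩
      have ht0 : 0 ≤ t := htdef ▸ ha_psd _
      have hee : a (v - Ph v) (v - Ph v) = s - t := by
        have hp := hpyth v
        rw [← htdef] at hp
        linarith
      have hee0 : 0 ≤ s - t := hee ▸ ha_psd _
      obtain ⟨ε, hεdef⟩ : ∃ e : ℝ, e = Real.sqrt (s - t) := ⟨_, rfl⟩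
      have hε0 : 0 ≤ ε := hεdef ▸ Real.sqrt_nonneg _
      have hε2 : ε ^ 2 = s - t := by rw [hεdef]; exact Real.sq_sqrt hee0
      have hγe : ‖γ (v - Ph v)‖ ≤ Ch * ε := by
        have h := hCh_bound v
        rw [hee, ← hεdef] at h
        exact h
      have hG2ge : μ k1 * s ≤ ‖γ v‖ ^ 2 := by
        rw [hG2, hsdef, Finset.mul_sum]
        apply Finset.sum_le_sum
        intro i _
        have h := hμk_le i
        nlinarith [sq_nonneg (c i)]
      have hg0 : (0:ℝ) ≤ ‖γ (Ph v)‖ := norm_nonneg _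
      have hG0 : (0:ℝ) ≤ ‖γ v‖ := norm_nonneg _
      have htri : ‖γ v‖ ≤ ‖γ (Ph v)‖ + Ch * ε := by
        have hsplit : γ v = γ (Ph v) + γ (v - Ph v) := by
          rw [← map_add]
          congr 1
          abel
        calc ‖γ v‖ = ‖γ (Ph v) + γ (v - Ph v)‖ := by rw [hsplit]
          _ ≤ ‖γ (Ph v)‖ + ‖γ (v - Ph v)‖ := norm_add_le _ _
          _ ≤ ‖γ (Ph v)‖ + Ch * ε := by linarith
      obtain ⟨S, hSdef⟩ : ∃ S : ℝ, S = Real.sqrt s := ⟨_, rfl⟩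
      have hS0 : 0 ≤ S := hSdef ▸ Real.sqrt_nonneg _
      have hS2 : S ^ 2 = s := by rw [hSdef]; exact Real.sq_sqrt hs_pos.le
      have hS_pos : 0 < S := by rw [hSdef]; exact Real.sqrt_pos.mpr hs_pos
      obtain ⟨r, hrdef⟩ : ∃ r : ℝ, r = Real.sqrt (μ k1) := ⟨_, rfl⟩
      have hr0 : 0 ≤ r := hrdef ▸ Real.sqrt_nonneg _
      have hr2 : r ^ 2 = μ k1 := by rw [hrdef]; exact Real.sq_sqrt hμk0.le
      have hεS : ε ≤ S := by rw [hεdef, hSdef]; exact Real.sqrt_le_sqrt (by linarith)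
      have hM : r * S ≤ ‖γ v‖ := by
        have h1 : (r * S) ^ 2 = μ k1 * s := by rw [mul_pow, hr2, hS2]
        have h2 : (r * S) ^ 2 ≤ ‖γ v‖ ^ 2 := by rw [h1]; exact hG2ge
        exact le_of_pow_le_pow_left₀ two_ne_zero hG0 h2
      have hglow : r * S - Ch * ε ≤ ‖γ (Ph v)‖ := by linarith
      have hChr : Ch < r := by
        have h1 : Ch ^ 2 < r ^ 2 := by linarith
        exact lt_of_pow_lt_pow_left₀ 2 hr0 h1
      have hεCh : Ch * ε ≤ Ch * S := mul_le_mul_of_nonneg_left hεS hCh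
      have hChSrS : Ch * S ≤ r * S := mul_le_mul_of_nonneg_right hChr.le hS0
      have ht_pos : 0 < t := by
        rcases eq_or_lt_of_le ht0 with h | h
        · exfalso
          have hPv : Ph v = 0 := by
            by_contra hne
            have h2 := ha_pos (Ph v) (hPh_mem v) hne
            rw [← htdef, ← h] at h2
            exact lt_irrefl 0 h2
          have hgz : ‖γ (Ph v)‖ = 0 := by rw [hPv, map_zero, norm_zero]
          have hεeq : ε = S := by rw [hεdef, hSdef, ← h, sub_zero]
          rw [hgz, hεeq] at hglow
          have h3 : 0 < (r - Ch) * S := mul_pos (by linarith) hS_pos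
          have h4 : (r - Ch) * S = r * S - Ch * S := by ring
          linarith
        · exact h
      have hrSe : 0 ≤ r * S - Ch * ε := by linarith
      constructor
      · rw [hTc, ← htdef]; exact ht_pos
      · rw [hTc, ← htdef]
        have haux := projection_lower_bound_aux r S ε Ch t ‖γ (Ph v)‖ hCh
          (by linarith) hglow hrSe hg0
        rw [hr2] at haux
        exact haux
    -- T is injective
    have hT0 : ∀ c : Fin k → ℝ, T c = 0 → c = 0 := by
      intro c h
      by_contra hc
      have := (hcore c hc).1
      rw [h] at this
      simp at this
    have hTinj : Function.Injective T := by
      intro c₁ c₂ h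
      have := hT0 (c₁ - c₂) (by rw [map_sub, h, sub_self])
      exact sub_eq_zero.mp this
    -- the subspace
    set H : Submodule ℝ Z := LinearMap.range T with hHdef
    have hHV : H ≤ Vh := by
      rintro x ⟨c, rfl⟩
      rw [hTapp]
      exact hPh_mem _
    have hHrank : finrank ℝ H = k := by
      rw [hHdef, LinearMap.finrank_range_of_inj hTinj]
      simp
    -- continuity
    have hγT_cont : Continuous fun c : Fin k → ℝ => ‖γ (T c)‖ ^ 2 := by
      have h1 : Continuous (γ ∘ₗ T) := (γ ∘ₗ T).continuous_of_finiteDimensional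
      exact (h1.norm).pow 2
    have hq_eq : (fun c : Fin k → ℝ => a (T c) (T c))
        = fun c => ∑ i, ∑ j, c i * c j * a (Ph (u i)) (Ph (u j)) := by
      funext c
      have hTc2 : T c = ∑ i, c i • Ph (u i) := by
        rw [hTapp, map_sum]
        simp [map_smul]
      rw [hTc2]
      simp only [map_sum, map_smul, LinearMap.coe_sum, Finset.sum_apply,
        LinearMap.smul_apply, smul_eq_mul, Finset.mul_sum]
      refine Finset.sum_congr rfl (fun i _ => Finset.sum_congr rfl (fun j _ => ?_))
      rw [ha_symm (Ph (u j)) (Ph (u i))]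
      ring
    have hq_cont : Continuous fun c : Fin k → ℝ => a (T c) (T c) := by
      rw [hq_eq]
      apply continuous_finset_sum
      intro i _
      apply continuous_finset_sum
      intro j _
      exact ((continuous_apply i).mul (continuous_apply j)).mul continuous_const
    -- compactness / attained minimum
    haveI : Nonempty (Fin k) := ⟨⟨0, by omega⟩⟩
    have hsph_ne : (Metric.sphere (0 : Fin k → ℝ) 1).Nonempty :=
      NormedSpace.sphere_nonempty.mpr zero_le_one
    have hsph_cpt : IsCompact (Metric.sphere (0 : Fin k → ℝ) 1) := isCompact_sphere 0 1
    set f : (Fin k → ℝ) → ℝ := fun c => ‖γ (T c)‖ ^ 2 / a (T c) (T c) with hfdef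
    have hne_zero : ∀ c ∈ Metric.sphere (0 : Fin k → ℝ) 1, c ≠ 0 := by
      intro c hc h0
      rw [h0] at hc
      simp at hc
    have hf_cont : ContinuousOn f (Metric.sphere (0 : Fin k → ℝ) 1) := by
      apply ContinuousOn.div hγT_cont.continuousOn hq_cont.continuousOn
      intro c hc
      exact (hcore c (hne_zero c hc)).1.ne'
    obtain ⟨c₀, hc₀mem, hc₀min⟩ := hsph_cpt.exists_isMinOn hsph_ne hf_cont
    have hc₀0 : c₀ ≠ 0 := hne_zero c₀ hc₀mem
    have hRT : ∀ c : Fin k → ℝ, R (T c) = f c := fun c => hR (T c)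
    have hfscale : ∀ (r : ℝ) (c : Fin k → ℝ), r ≠ 0 → f (r • c) = f c := by
      intro r c hr
      have h1 : T (r • c) = r • T c := map_smul T r c
      have h2 : ‖γ (T (r • c))‖ ^ 2 = r ^ 2 * ‖γ (T c)‖ ^ 2 := by
        rw [h1, map_smul, norm_smul, mul_pow, Real.norm_eq_abs, sq_abs]
      have h3 : a (T (r • c)) (T (r • c)) = r ^ 2 * a (T c) (T c) := by
        rw [h1]
        simp only [map_smul, LinearMap.smul_apply, smul_eq_mul]
        ring
      rw [hfdef]
      simp only [h2, h3]
      exact mul_div_mul_left _ _ (pow_ne_zero 2 hr)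
    have hm_least : IsLeast (R '' {x : Z | x ∈ H ∧ x ≠ 0}) (f c₀) := by
      constructor
      · refine ⟨T c₀, ⟨⟨c₀, rfl⟩, ?_⟩, hRT c₀⟩
        intro h
        have := (hcore c₀ hc₀0).1
        rw [h] at this
        simp at this
      · rintro y ⟨x, ⟨⟨c, rfl⟩, hx0⟩, rfl⟩
        have hc0 : c ≠ 0 := fun h => hx0 (by rw [h, map_zero])
        have hcn : ‖c‖ ≠ 0 := norm_ne_zero_iff.mpr hc0
        have hmem : (‖c‖⁻¹ • c) ∈ Metric.sphere (0 : Fin k → ℝ) 1 := by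
          rw [mem_sphere_zero_iff_norm, norm_smul, norm_inv, norm_norm]
          exact inv_mul_cancel₀ hcn
        have hmin : f c₀ ≤ f (‖c‖⁻¹ • c) := hc₀min hmem
        rw [hfscale (‖c‖⁻¹) c (inv_ne_zero hcn)] at hmin
        rw [hRT]
        exact hmin
    have h1 : f c₀ ≤ μkh := hμkh.2 ⟨H, hHV, hHrank, hm_least⟩
    have h2 : μ k1 - Ch ^ 2 ≤ f c₀ := by
      obtain ⟨htpos, hineq⟩ := hcore c₀ hc₀0
      rw [hfdef]
      rw [le_div_iff₀ htpos]
      exact hineq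
    linarith
  -- conclude
  rw [hlamk, hlamkh]
  have hd : (0:ℝ) < μkh + Ch ^ 2 := by positivity
  have heq : 1 / μkh / (1 + Ch ^ 2 * (1 / μkh)) = 1 / (μkh + Ch ^ 2) := by
    rw [div_div]
    congr 1
    field_simp
  rw [heq, ge_iff_le]
  exact one_div_le_one_div_of_le hμk0 key
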